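/- If x' ≤ x in Bruhat order, then x' ◁ y ≤ x ◁ y, where x ◁ y denotes the unique minimal element of {xv : v ≤ y}. -/

import Mathlib

/-- The Bruhat order on a Coxeter group, defined via the subword property:
`u ≤ v` iff some reduced word for `v` contains a subword whose product is `u`. -/
def bruhatLE {B W : Type*} [Group W] {M : CoxeterMatrix B} (cs : CoxeterSystem M W)
    (u v : W) : Prop :=
  ∃ l : List B, cs.IsReduced l ∧ cs.wordProd l = v ∧
    ∃ l' : List B, l'.Sublist l ∧ cs.wordProd l' = u

/-!
The subword order coincides with the chain order generated by `u < u t` for reflections `t` with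
`ℓ u < ℓ (u t)`. This makes it transitive and shows that `u ≤ w` is witnessed by a subword of
*every* word for `w`. The input for both directions is the strong exchange property, which comes
from the `ℤ/2`-valued reflection cocycle `η(w, t)`, the parity of the number of occurrences of `t`
in the left inversion sequence of a word for `w`; it is built by lifting `sᵢ ↦ (δ_{sᵢ}, sᵢ)` to
`(W → ℤ/2) ⋊ W`.

For the theorem, write the witness as `m = x v` with `v` the product of a subword of a reduced word
for `y`. Reading that subword letter by letter, the lifting property
`a ≤ b → a ≤ b s ∨ a s ≤ b s` produces a subword `σ` with `x' σ ≤ x v = m`. Since `σ ≤ y`,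
minimality of `m'` gives `m' ≤ x' σ ≤ m`.
-/

open List

theorem SemidirectProduct.mk_pow {N G : Type*} [CommGroup N] [Group G] {φ : G →* MulAut N}
    (n : N) (g : G) (k : ℕ) :
    (⟨n, g⟩ : N ⋊[φ] G) ^ k = ⟨∏ l ∈ Finset.range k, φ (g ^ l) n, g ^ k⟩ := by
  induction k with
  | zero => rw [pow_zero, Finset.prod_range_zero, pow_zero]; rfl
  | succ k ih => rw [pow_succ, ih, SemidirectProduct.mul_def, Finset.prod_range_succ, pow_succ]

theorem Finset.prod_range_two_mul {M : Type*} [CommMonoid M] (f : ℕ → M) (m : ℕ) :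
    ∏ p ∈ range (2 * m), f p = ∏ l ∈ range m, f (2 * l) * f (2 * l + 1) := by
  induction m with
  | zero => simp
  | succ m ih => rw [Nat.mul_succ, prod_range_succ, prod_range_succ, prod_range_succ, ih, mul_assoc]

theorem mul_self_eq_one_of_zmod_two {α : Type*} (f : α → Multiplicative (ZMod 2)) :
    f * f = 1 := by
  funext u
  exact (by decide : ∀ y : Multiplicative (ZMod 2), y * y = 1) (f u)

namespace CoxeterSystem

variable {B W : Type*} [Group W] {M : CoxeterMatrix B} (cs : CoxeterSystem M W)

local prefix:100 "s " => cs.simple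
local prefix:100 "π " => cs.wordProd
local prefix:100 "ℓ " => cs.length

section ReflectionCocycle

open scoped Classical

variable (W) in
def conjArgAut : W →* MulAut (W → Multiplicative (ZMod 2)) :=
  mulAutArrow.comp (ConjAct.toConjAct : W ≃* ConjAct W).toMonoidHom

theorem conjArgAut_apply (w : W) (f : W → Multiplicative (ZMod 2)) (u : W) :
    conjArgAut W w f u = f (w⁻¹ * u * w) := by
  change f ((ConjAct.toConjAct w)⁻¹ • u) = _
  rw [ConjAct.smul_def]
  simp

theorem conjArgAut_mulSingle (w t : W) (a : Multiplicative (ZMod 2)) :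
    conjArgAut W w (Pi.mulSingle t a) = Pi.mulSingle (w * t * w⁻¹) a := by
  funext u
  rw [conjArgAut_apply, Pi.mulSingle_apply, Pi.mulSingle_apply]
  refine if_congr ⟨fun h => ?_, fun h => ?_⟩ rfl rfl
  · rw [← h]; group
  · rw [h]; group

variable (W) in
abbrev ParityExt := (W → Multiplicative (ZMod 2)) ⋊[conjArgAut W] W

theorem isLiftable_parityExt :
    M.IsLiftable (fun i => (⟨Pi.mulSingle (s i) (.ofAdd 1), s i⟩ : ParityExt W)) := by
  -- With `c = sᵢ sⱼ`, the first component of the `M i j`-th power is `∏_{p < 2 M i j} δ_{c^p sᵢ}`,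
  -- in which every factor occurs twice because `c ^ M i j = 1`.
  intro i j
  set c := s i * s j
  set χ : ℕ → W → Multiplicative (ZMod 2) := fun p => Pi.mulSingle (c ^ p * s i) (.ofAdd 1)
  have hsemi : SemiconjBy (s i) c⁻¹ c := by
    simp only [SemiconjBy, c, mul_inv_rev, cs.inv_simple, mul_assoc]
  have hconj (l : ℕ) : c ^ l * s i * (c ^ l)⁻¹ = c ^ (2 * l) * s i := by
    rw [← inv_pow, mul_assoc, (hsemi.pow_right l).eq, ← mul_assoc, two_mul, pow_add]
  have hconj' (l : ℕ) : c ^ l * (s i * s j * (s i)⁻¹) * (c ^ l)⁻¹ = c ^ (2 * l + 1) * s i := by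
    rw [cs.inv_simple, show s i * s j * s i = c * s i from rfl, ← mul_assoc, ← pow_succ,
      pow_succ', mul_assoc c, mul_assoc c, hconj, ← mul_assoc, ← pow_succ']
  have hperiod (p : ℕ) : χ (M i j + p) = χ p := by
    simp only [χ, pow_add, c, cs.simple_mul_simple_pow, one_mul]
  show (⟨_, c⟩ : ParityExt W) ^ M i j = 1
  rw [SemidirectProduct.mk_pow, cs.simple_mul_simple_pow]
  congr 1
  calc ∏ l ∈ Finset.range (M i j), _ = ∏ l ∈ Finset.range (M i j), χ (2 * l) * χ (2 * l + 1) :=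
        Finset.prod_congr rfl fun l _ => by
          simp only [map_mul, conjArgAut_mulSingle, hconj, hconj', χ]
    _ = ∏ p ∈ Finset.range (M i j + M i j), χ p := by
        rw [← two_mul, Finset.prod_range_two_mul]
    _ = 1 := by
        rw [Finset.prod_range_add]
        simp only [hperiod]
        exact mul_self_eq_one_of_zmod_two _

noncomputable def parityLift : W →* ParityExt W :=
  cs.lift ⟨fun i => ⟨Pi.mulSingle (s i) (.ofAdd 1), s i⟩, cs.isLiftable_parityExt⟩

theorem parityLift_right (w : W) : (cs.parityLift w).right = w := by
  suffices SemidirectProduct.rightHom.comp cs.parityLift = MonoidHom.id W from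
    DFunLike.congr_fun this w
  exact cs.ext_simple fun i => by simp [parityLift, cs.lift_apply_simple]

/-- The parity of the number of occurrences of `t` in the left inversion sequence of any word
for `w`. -/
noncomputable def reflParity (w t : W) : ZMod 2 :=
  Multiplicative.toAdd ((cs.parityLift w).left t)

theorem reflParity_mul (a b t : W) :
    cs.reflParity (a * b) t = cs.reflParity a t + cs.reflParity b (a⁻¹ * t * a) := by
  rw [reflParity, map_mul, SemidirectProduct.mul_left, Pi.mul_apply, toAdd_mul, parityLift_right,
    conjArgAut_apply, reflParity, reflParity]

theorem reflParity_one (t : W) : cs.reflParity 1 t = 0 := by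
  simp [reflParity]

theorem reflParity_simple (i : B) (t : W) :
    cs.reflParity (s i) t = if t = s i then 1 else 0 := by
  simp only [reflParity, parityLift, cs.lift_apply_simple, Pi.mulSingle_apply]
  split_ifs <;> rfl

theorem reflParity_inv (a t : W) : cs.reflParity a⁻¹ t = cs.reflParity a (a * t * a⁻¹) := by
  have h := cs.reflParity_mul a a⁻¹ (a * t * a⁻¹)
  rw [mul_inv_cancel, reflParity_one, show a⁻¹ * (a * t * a⁻¹) * a = t by group] at h
  exact (by decide : ∀ x y : ZMod 2, 0 = y + x → x = y) _ _ h

theorem reflParity_self {t : W} (ht : cs.IsReflection t) : cs.reflParity t t = 1 := by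
  obtain ⟨a, i, rfl⟩ := ht
  rw [reflParity_mul, reflParity_mul, reflParity_inv, reflParity_simple,
    show a⁻¹ * (a * s i * a⁻¹) * a = s i by group, if_pos rfl,
    show a * ((a * s i)⁻¹ * (a * s i * a⁻¹) * (a * s i)) * a⁻¹ = a * s i * a⁻¹ by group]
  exact (by decide : ∀ x : ZMod 2, x + 1 + x = 1) _

theorem mem_leftInvSeq_of_reflParity_ne_zero (ω : List B) {t : W}
    (h : cs.reflParity (π ω) t ≠ 0) : t ∈ cs.leftInvSeq ω := by
  induction ω generalizing t with
  | nil => exact absurd (cs.reflParity_one t) (by simpa using h)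
  | cons i ω ih =>
    rw [wordProd_cons, reflParity_mul, reflParity_simple] at h
    rw [leftInvSeq]
    by_cases hti : t = s i
    · exact hti ▸ mem_cons_self
    · rw [if_neg hti, zero_add] at h
      refine mem_cons_of_mem _ (mem_map.mpr ⟨_, ih h, ?_⟩)
      rw [MulAut.conj_apply]
      group

theorem mem_leftInvSeq_of_isLeftInversion {ω : List B} {t : W}
    (ht : cs.IsLeftInversion (π ω) t) : t ∈ cs.leftInvSeq ω := by
  have htt : t * t = 1 := ht.1.mul_self
  have hback : cs.reflParity (t * π ω) t = 0 := by
    by_contra hne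
    obtain ⟨τ, hτ, hτω⟩ := cs.exists_isReduced (t * π ω)
    rw [hτω] at hne
    have := (cs.isLeftInversion_of_mem_leftInvSeq hτ
      (cs.mem_leftInvSeq_of_reflParity_ne_zero τ hne)).2
    rw [← hτω, ← mul_assoc, htt, one_mul] at this
    exact lt_asymm this ht.2
  apply cs.mem_leftInvSeq_of_reflParity_ne_zero
  rw [show π ω = t * (t * π ω) by rw [← mul_assoc, htt, one_mul], reflParity_mul,
    reflParity_self cs ht.1, show t⁻¹ * t * t = t by group, hback]
  decide

theorem exists_wordProd_eraseIdx_eq_mul {ω : List B} {t : W}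
    (ht : cs.IsLeftInversion (π ω) t) : ∃ j < ω.length, π (ω.eraseIdx j) = t * π ω := by
  obtain ⟨j, hj, rfl⟩ := mem_iff_getElem.mp (cs.mem_leftInvSeq_of_isLeftInversion ht)
  refine ⟨j, by simpa using hj, ?_⟩
  rw [← getD_leftInvSeq_mul_wordProd, getD_eq_getElem]

end ReflectionCocycle

def BruhatStep (u w : W) : Prop := ∃ t, cs.IsReflection t ∧ w = u * t ∧ ℓ u < ℓ w

def ChainLE : W → W → Prop := Relation.ReflTransGen cs.BruhatStep

variable {cs}

theorem bruhatStep_simple_mul {w : W} {i : B} (hw : ℓ w < ℓ (s i * w)) :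
    cs.BruhatStep w (s i * w) :=
  ⟨w⁻¹ * s i * w, by simpa using (cs.isReflection_simple i).conj w⁻¹, by group, hw⟩

theorem BruhatStep.exists_wordProd_eraseIdx {u w : W} (h : cs.BruhatStep u w) {β : List B}
    (hw : π β = w) : ∃ j < β.length, π (β.eraseIdx j) = u := by
  obtain ⟨t, ht, rfl, hlt⟩ := h
  have hu : u * t * u⁻¹ * (u * t) = u := by
    rw [mul_assoc, inv_mul_cancel_left, mul_assoc, ht.mul_self, mul_one]
  obtain ⟨j, hj, hprod⟩ := cs.exists_wordProd_eraseIdx_eq_mul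
    ⟨ht.conj u, by rwa [hw, hu]⟩
  exact ⟨j, hj, by rw [hprod, hw, hu]⟩

theorem BruhatStep.simple_mul_or {u w : W} (h : cs.BruhatStep u w) (i : B) :
    cs.BruhatStep (s i * u) (s i * w) ∨ s i * u = w := by
  obtain ⟨t, ht, hw, hlt⟩ := id h
  rcases (ht.length_mul_left_ne (s i * u)).lt_or_gt with hdown | hup
  -- Here `ℓ (s u) = ℓ w`; exchanging `t` in the reduced word `i :: κ` for `w` must delete the
  -- first letter, since deleting any other one would make `s u` too short.
  · right
    rw [mul_assoc, ← hw] at hdown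
    have := cs.length_simple_mul u i
    have := cs.length_simple_mul w i
    obtain ⟨κ, hκ, hκw⟩ := cs.exists_isReduced (s i * w)
    have hκprod : π (i :: κ) = w := by
      rw [wordProd_cons, ← hκw, simple_mul_simple_cancel_left]
    obtain ⟨j, hj, hprod⟩ := h.exists_wordProd_eraseIdx hκprod
    cases j with
    | zero => rw [← hprod, eraseIdx_cons_zero, ← hκw, simple_mul_simple_cancel_left]
    | succ j =>
      rw [eraseIdx_cons_succ, wordProd_cons] at hprod
      have hlen : ℓ (s i * u) = ℓ (π (κ.eraseIdx j)) := by
        rw [← hprod, simple_mul_simple_cancel_left]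
      have := cs.length_wordProd_le (κ.eraseIdx j)
      have := length_eraseIdx_add_one (show j < κ.length by simpa using hj)
      have : ℓ (s i * w) = κ.length := by rw [hκw]; exact hκ.eq
      exfalso
      omega
  · exact .inl ⟨t, ht, by rw [hw, mul_assoc], by rwa [hw, ← mul_assoc]⟩

theorem ChainLE.simple_mul_or {u w : W} (h : cs.ChainLE u w) (i : B) :
    cs.ChainLE (s i * u) (s i * w) ∨ cs.ChainLE (s i * u) w := by
  induction h with
  | refl => exact .inl .refl
  | tail _ hstep ih =>
    rcases ih with ih | ih
    · rcases hstep.simple_mul_or i with h | h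
      · exact .inl (ih.tail h)
      · exact .inr (h ▸ ih)
    · exact .inr (ih.tail hstep)

theorem ChainLE.simple_mul {u w : W} (h : cs.ChainLE u w) {i : B} (hw : ℓ w < ℓ (s i * w)) :
    cs.ChainLE (s i * u) (s i * w) :=
  (h.simple_mul_or i).elim id fun h => h.tail (bruhatStep_simple_mul hw)

theorem chainLE_wordProd_of_sublist {α β : List B} (hβ : cs.IsReduced β) (h : α <+ β) :
    cs.ChainLE (π α) (π β) := by
  induction β generalizing α with
  | nil => rw [sublist_nil.mp h]; exact .refl
  | cons i κ ih =>
    have hκ : cs.IsReduced κ := by simpa using hβ.drop 1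
    have hup : ℓ (π κ) < ℓ (s i * π κ) := by
      rw [← wordProd_cons, hβ.eq, hκ.eq, length_cons]
      omega
    rw [wordProd_cons]
    rcases sublist_cons_iff.mp h with hκα | ⟨α₀, rfl, hκα₀⟩
    · exact (ih hκ hκα).tail (bruhatStep_simple_mul hup)
    · rw [wordProd_cons]
      exact (ih hκ hκα₀).simple_mul hup

theorem ChainLE.exists_sublist {u w : W} (h : cs.ChainLE u w) {β : List B} (hw : π β = w) :
    ∃ α, α <+ β ∧ π α = u := by
  induction h generalizing β with
  | refl => exact ⟨β, .refl β, hw⟩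
  | tail _ hstep ih =>
    obtain ⟨j, -, hj⟩ := hstep.exists_wordProd_eraseIdx hw
    obtain ⟨α, hα, hαprod⟩ := ih hj
    exact ⟨α, hα.trans (β.eraseIdx_sublist j), hαprod⟩

variable (cs)

theorem bruhatLE_iff_chainLE {u w : W} : bruhatLE cs u w ↔ cs.ChainLE u w := by
  constructor
  · rintro ⟨β, hβ, rfl, α, hα, rfl⟩
    exact chainLE_wordProd_of_sublist hβ hα
  · intro h
    obtain ⟨β, hβ, rfl⟩ := cs.exists_isReduced w
    obtain ⟨α, hα, rfl⟩ := h.exists_sublist rfl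
    exact ⟨β, hβ, rfl, α, hα, rfl⟩

theorem bruhatLE_trans {u v w : W} (huv : bruhatLE cs u v) (hvw : bruhatLE cs v w) :
    bruhatLE cs u w := by
  rw [bruhatLE_iff_chainLE] at *
  exact huv.trans hvw

theorem bruhatLE_mul_simple_or {u w : W} (h : bruhatLE cs u w) (i : B) :
    bruhatLE cs u (w * s i) ∨ bruhatLE cs (u * s i) (w * s i) := by
  rcases cs.length_mul_simple w i with hup | hdown
  · obtain ⟨β, hβ, rfl, α, hα, rfl⟩ := h
    refine .inl ⟨β ++ [i], ?_, by rw [wordProd_append, wordProd_singleton], α,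
      hα.trans (sublist_append_left _ _), rfl⟩
    rw [IsReduced, wordProd_append, wordProd_singleton, hup, hβ.eq, length_append,
      length_singleton]
  · obtain ⟨κ, hκ, hκw⟩ := cs.exists_isReduced (w * s i)
    have hprod : π (κ ++ [i]) = w := by
      rw [wordProd_append, wordProd_singleton, ← hκw, simple_mul_simple_cancel_right]
    obtain ⟨α, hα, rfl⟩ := ((cs.bruhatLE_iff_chainLE).mp h).exists_sublist hprod
    obtain ⟨α₀, α₁, rfl, h₀, h₁⟩ := sublist_append_iff.mp hα
    rcases sublist_singleton.mp h₁ with rfl | rfl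
    · exact .inl ⟨κ, hκ, hκw.symm, α₀, h₀, by rw [append_nil]⟩
    · refine .inr ⟨κ, hκ, hκw.symm, α₀, h₀, ?_⟩
      rw [wordProd_append, wordProd_singleton, simple_mul_simple_cancel_right]

theorem exists_sublist_bruhatLE_mul_wordProd {x x' : W} (hx : bruhatLE cs x' x) (ω : List B) :
    ∃ σ, σ <+ ω ∧ bruhatLE cs (x' * π σ) (x * π ω) := by
  induction ω using reverseRecOn with
  | nil => exact ⟨[], .slnil, by simpa using hx⟩
  | append_singleton ω i ih =>
    obtain ⟨σ, hσ, hle⟩ := ih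
    rw [wordProd_append, wordProd_singleton, ← mul_assoc]
    rcases cs.bruhatLE_mul_simple_or hle i with h | h
    · exact ⟨σ, hσ.trans (sublist_append_left _ _), h⟩
    · refine ⟨σ ++ [i], hσ.append (.refl _), ?_⟩
      rwa [wordProd_append, wordProd_singleton, ← mul_assoc]

end CoxeterSystem

theorem downwards_demazure_left_monotone_general {B W : Type*} [Group W] {M : CoxeterMatrix B}
    (cs : CoxeterSystem M W) (x x' y m m' : W)
    (hx' : bruhatLE cs x' x)
    (hmem : ∃ v : W, bruhatLE cs v y ∧ m = x * v)
    (hmin' : ∀ z : W, (∃ v : W, bruhatLE cs v y ∧ z = x' * v) → bruhatLE cs m' z) :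
    bruhatLE cs m' m := by
  obtain ⟨_, ⟨ω, hω, hωy, ω', hω', rfl⟩, rfl⟩ := hmem
  obtain ⟨σ, hσ, hle⟩ := cs.exists_sublist_bruhatLE_mul_wordProd hx' ω'
  have hσy : bruhatLE cs (cs.wordProd σ) y := ⟨ω, hω, hωy, σ, hσ.trans hω', rfl⟩
  exact cs.bruhatLE_trans (hmin' _ ⟨_, hσy, rfl⟩) hle

/-- Monotonicity of the downwards Demazure product `◁` in the first argument:
if `x' ≤ x` then `x' ◁ y ≤ x ◁ y`, where `x ◁ y` is the unique minimal
element of `{xv : v ≤ y}`. -/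
theorem downwards_demazure_left_monotone {B W : Type*} [Group W] {M : CoxeterMatrix B}
    (cs : CoxeterSystem M W) (x x' y m m' : W)
    (hx' : bruhatLE cs x' x)
    (hmem : ∃ v : W, bruhatLE cs v y ∧ m = x * v)
    (hmin : ∀ z : W, (∃ v : W, bruhatLE cs v y ∧ z = x * v) → bruhatLE cs m z)
    (hmem' : ∃ v : W, bruhatLE cs v y ∧ m' = x' * v)
    (hmin' : ∀ z : W, (∃ v : W, bruhatLE cs v y ∧ z = x' * v) → bruhatLE cs m' z) :
    bruhatLE cs m' m :=
  downwards_demazure_left_monotone_general cs x x' y m m' hx' hmem hmin'
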